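/- arXiv:2402.14426 — 5 statements merged into one kernel-verified Lean document; each statement's English description precedes it below -/
import Mathlib

section
/- Let K_n be the complete graph on a vertex set V of size n. The number of square-free words over V that represent K_n is exactly n · n!. -/
variable {V : Type*} [DecidableEq V]

/-- Distinct letters `x` and `y` alternate in `w`: deleting all other letters
leaves no two equal consecutive letters. -/
def Alternates (x y : V) (w : List V) : Prop :=
  (w.filter fun z => decide (z = x ∨ z = y)).Chain' (· ≠ ·)

/-- `w` represents the graph `G`: every vertex occurs in `w`, and distinct
vertices alternate in `w` iff they are adjacent in `G`. -/
def Represents (G : SimpleGraph V) (w : List V) : Prop :=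
  (∀ v : V, v ∈ w) ∧ ∀ x y : V, x ≠ y → (Alternates x y w ↔ G.Adj x y)

/-- `w` contains a square. -/
def HasSquare (w : List V) : Prop :=
  ∃ u X v : List V, X ≠ [] ∧ w = u ++ X ++ X ++ v

/-- `w` is square-free. -/
def SqFree (w : List V) : Prop := ¬ HasSquare w

section Helpers
set_option linter.unusedSectionVars false
set_option linter.unusedVariables false

private lemma chain'_no_adjacent {c : V} {l₁ l₂ : List V} (h2 : l₂.head? = some c)
    (h : (l₁ ++ c :: l₂).Chain' (· ≠ ·)) : False := by
  have he : (l₁ ++ [c]) ++ l₂ = l₁ ++ c :: l₂ := by simp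
  rw [← he] at h; unfold List.Chain' at h; rw [List.isChain_append] at h
  exact h.2.2 c (by rw [List.getLast?_concat]; rfl) c h2 rfl

private lemma head_filter_eq {P : V → Bool} {c : V} (hPc : P c = true) :
    ∀ (m : List V) (t : ℕ) (ht : t < m.length), m[t] = c →
      (∀ s (hs : s < m.length), s < t → P m[s] = true → m[s] = c) →
      (m.filter P).head? = some c := by
  intro m
  induction m with
  | nil => intro t ht; simp at ht
  | cons a m ih =>
    intro t ht hc hbef
    rcases t with _ | t
    · simp only [List.getElem_cons_zero] at hc; subst hc
      simp [List.filter_cons, hPc]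
    · by_cases hPa : P a = true
      · have ha : a = c := hbef 0 (by simp) (by omega) (by simpa using hPa)
        subst ha; simp [List.filter_cons, hPc]
      · rw [List.filter_cons, if_neg hPa]
        exact ih t (by simpa using ht) (by simpa using hc)
          (fun s hs hst hPs => by
            have := hbef (s+1) (by simpa using hs) (by omega) (by simpa using hPs)
            simpa using this)

private lemma not_alternates {x y : V} {w : List V} {q r : ℕ} (hq : q < w.length)
    (hr : r < w.length) (hqr : q < r) {c : V} (hc : c = x ∨ c = y)
    (hcq : w[q] = c) (hcr : w[r] = c)
    (hbet : ∀ s (hs : s < w.length), q < s → s < r → (w[s] = x ∨ w[s] = y) → w[s] = c) :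
    ¬ Alternates x y w := by
  intro halt
  unfold Alternates at halt
  have hPc : (decide (c = x ∨ c = y)) = true := decide_eq_true hc
  have hsplit : w = w.take q ++ c :: w.drop (q+1) := by
    conv_lhs => rw [← List.take_append_drop q w]
    rw [List.drop_eq_getElem_cons hq, hcq]
  rw [hsplit, List.filter_append, List.filter_cons, if_pos hPc] at halt
  apply chain'_no_adjacent ?_ halt
  have hlen : r - (q+1) < (w.drop (q+1)).length := by
    rw [List.length_drop]; omega
  apply head_filter_eq (P := fun z => decide (z = x ∨ z = y)) hPc (w.drop (q+1)) (r - (q+1)) hlen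
  · rw [List.getElem_drop]
    have : q + 1 + (r - (q+1)) = r := by omega
    simp only [this]; exact hcr
  · intro s hs hst hPs
    rw [List.getElem_drop] at hPs ⊢
    have hsw : q + 1 + s < w.length := by rw [List.length_drop] at hs; omega
    exact hbet (q+1+s) hsw (by omega) (by rw [List.length_drop] at hs; omega)
      (of_decide_eq_true hPs)

private lemma card_le_length [Fintype V] {w : List V} (hmem : ∀ v : V, v ∈ w) :
    Fintype.card V ≤ w.length := by
  have h1 : w.toFinset = Finset.univ :=
    Finset.eq_univ_iff_forall.mpr fun v => List.mem_toFinset.mpr (hmem v)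
  calc Fintype.card V = w.toFinset.card := by rw [h1, Finset.card_univ]
    _ ≤ w.length := List.toFinset_card_le w

private lemma take_card_nodup [Fintype V] {w : List V} (hmem : ∀ v : V, v ∈ w)
    (halt : ∀ x y : V, x ≠ y → Alternates x y w) :
    (w.take (Fintype.card V)).Nodup := by
  set n := Fintype.card V with hn
  have hnlen : n ≤ w.length := card_le_length hmem
  rw [List.Nodup, List.pairwise_iff_getElem]
  intro i j hi hj hij
  rw [List.length_take] at hi hj
  have hiw : i < w.length := by omega
  have hjw : j < w.length := by omega
  rw [List.getElem_take, List.getElem_take]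
  intro heq
  -- w[i] = w[j], i < j < n
  set c := w[i] with hc
  -- find y not in w.take (j+1)
  have hsub : (w.take (j+1)).toFinset ⊆ (w.take j).toFinset := by
    intro v hv
    rw [List.mem_toFinset, List.mem_iff_getElem] at hv
    obtain ⟨s, hs, hsv⟩ := hv
    rw [List.length_take] at hs
    rw [List.getElem_take] at hsv
    rw [List.mem_toFinset, List.mem_iff_getElem]
    by_cases hsj : s < j
    · exact ⟨s, by rw [List.length_take]; omega, by rw [List.getElem_take]; exact hsv⟩
    · have : s = j := by omega
      subst this
      exact ⟨i, by rw [List.length_take]; omega, by rw [List.getElem_take]; rw [← hsv, ← heq]⟩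
  have hcard : (w.take (j+1)).toFinset.card < n := by
    calc (w.take (j+1)).toFinset.card ≤ (w.take j).toFinset.card := Finset.card_le_card hsub
      _ ≤ (w.take j).length := List.toFinset_card_le _
      _ ≤ j := by rw [List.length_take]; omega
      _ < n := by omega
  have hex : ∃ y : V, y ∉ (w.take (j+1)).toFinset := by
    by_contra hall
    push_neg at hall
    have : Finset.univ ⊆ (w.take (j+1)).toFinset := fun y _ => hall y
    have := Finset.card_le_card this
    rw [Finset.card_univ] at this
    omega
  obtain ⟨y, hy⟩ := hex
  rw [List.mem_toFinset] at hy
  have hcy : c ≠ y := by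
    intro h
    apply hy
    rw [← h, hc, List.mem_iff_getElem]
    exact ⟨i, by rw [List.length_take]; omega, by rw [List.getElem_take]⟩
  have hbet : ∀ s (hs : s < w.length), i < s → s < j → (w[s] = c ∨ w[s] = y) → w[s] = c := by
    intro s hs his hsj hor
    rcases hor with h | h
    · exact h
    · exfalso; apply hy
      rw [← h, List.mem_iff_getElem]
      exact ⟨s, by rw [List.length_take]; omega, by rw [List.getElem_take]⟩
  exact not_alternates hiw hjw hij (Or.inl rfl) rfl heq.symm hbet (halt c y hcy)

private lemma mem_take_card [Fintype V] {w : List V} (hmem : ∀ v : V, v ∈ w)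
    (halt : ∀ x y : V, x ≠ y → Alternates x y w) :
    ∀ v : V, v ∈ w.take (Fintype.card V) := by
  have hnd := take_card_nodup hmem halt
  have hlen : (w.take (Fintype.card V)).length = Fintype.card V := by
    rw [List.length_take]; exact min_eq_left (card_le_length hmem)
  have : (w.take (Fintype.card V)).toFinset = Finset.univ := by
    apply Finset.eq_univ_of_card
    rw [List.toFinset_card_of_nodup hnd, hlen]
  intro v
  rw [← List.mem_toFinset, this]
  exact Finset.mem_univ v

private lemma periodic [Fintype V] [Nonempty V] {w : List V} (hmem : ∀ v : V, v ∈ w)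
    (halt : ∀ x y : V, x ≠ y → Alternates x y w) :
    ∀ m (hm : m < w.length),
      w[m] = w[m % Fintype.card V]'(lt_of_le_of_lt (Nat.mod_le m _) hm) := by
  set n := Fintype.card V with hn
  have hnlen : n ≤ w.length := card_le_length hmem
  have hnd := take_card_nodup hmem halt
  have hnpos : 0 < n := Fintype.card_pos
  have hget : ∀ {a b : ℕ} (ha : a < w.length) (hb : b < w.length), a = b → w[a] = w[b] := by
    intro a b ha hb h; subst h; rfl
  have hinj : ∀ a b, ∀ (ha : a < n) (hb : b < n),
      w[a]'(by omega) = w[b]'(by omega) → a = b := by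
    intro a b ha hb h
    have ha' : a < (w.take n).length := by rw [List.length_take]; omega
    have hb' : b < (w.take n).length := by rw [List.length_take]; omega
    have : (w.take n)[a] = (w.take n)[b] := by
      rw [List.getElem_take, List.getElem_take]; exact h
    exact (hnd.getElem_inj_iff).mp this
  intro m
  induction m using Nat.strong_induction_on with
  | _ m ih =>
    intro hm
    by_cases hmn : m < n
    · exact hget hm _ (Nat.mod_eq_of_lt hmn).symm
    · -- m ≥ n
      have hnm : n ≤ m := by omega
      have him : m - n < m := by omega
      have hiw : m - n < w.length := by omega
      have hmi : m % n = (m - n) % n := Nat.mod_eq_sub_mod hnm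
      have him2 : (m - n) % n < w.length := lt_of_le_of_lt (Nat.mod_le _ _) hiw
      have hx : w[m - n] = w[(m - n) % n]'him2 := ih (m - n) him hiw
      by_contra hne
      -- y := w[m], x := w[(m-n) % n]
      have hyx : w[m] ≠ w[(m - n) % n]'him2 := by
        intro h
        exact hne (h.trans (hget him2 _ hmi.symm))
      have hinmod : (m - n) % n < n := Nat.mod_lt _ hnpos
      -- find b < n with w[b] = w[m]
      have hyin : w[m] ∈ w.take n := mem_take_card hmem halt _
      rw [List.mem_iff_getElem] at hyin
      obtain ⟨b, hb, hby⟩ := hyin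
      rw [List.length_take] at hb
      have hbn : b < n := lt_of_lt_of_le hb (min_le_left _ _)
      rw [List.getElem_take] at hby
      have hbw : b < w.length := by omega
      have hbne : b ≠ (m - n) % n := fun h => hyx (hby.symm.trans (hget hbw him2 h))
      obtain ⟨qd, hqd⟩ : ∃ qd, n * qd + (m - n) % n = m - n := ⟨(m - n) / n, Nat.div_add_mod _ n⟩
      set j₀ := if b > (m - n) % n then n * qd + b else n * qd + n + b with hj0
      have hij1 : m - n < j₀ := by rw [hj0]; split <;> omega
      have hij2 : j₀ < m := by rw [hj0]; split <;> omega
      have hij3 : j₀ % n = b := by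
        rw [hj0]; split
        · rw [Nat.mul_add_mod]; exact Nat.mod_eq_of_lt hbn
        · rw [show n * qd + n + b = n * (qd + 1) + b by ring, Nat.mul_add_mod]
          exact Nat.mod_eq_of_lt hbn
      have hj0w : j₀ < w.length := by omega
      have hj0nw : j₀ % n < w.length := lt_of_le_of_lt (Nat.mod_le _ _) hj0w
      have hj0y : w[j₀] = w[m] := by
        rw [ih j₀ hij2 hj0w]
        exact (hget hj0nw hbw hij3).trans hby
      -- between j₀ and m: no x and no y
      have hbet : ∀ s (hs : s < w.length), j₀ < s → s < m →
          (w[s] = w[(m - n) % n]'him2 ∨ w[s] = w[m]) → w[s] = w[m] := by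
        intro s hs h1 h2 hor
        have hsnw : s % n < w.length := lt_of_le_of_lt (Nat.mod_le _ _) hs
        have hsval : w[s] = w[s % n]'hsnw := ih s h2 hs
        have hsmod : s % n < n := Nat.mod_lt _ hnpos
        exfalso
        rcases hor with h | h
        · have heqmod : s % n = (m - n) % n :=
            hinj _ _ hsmod hinmod (hsval.symm.trans h)
          have hdvd : n ∣ s - (m - n) :=
            (Nat.modEq_iff_dvd' (by omega)).mp heqmod.symm
          have := Nat.le_of_dvd (by omega) hdvd
          omega
        · have heqmod : s % n = b :=
            hinj _ _ hsmod hbn (hsval.symm.trans (h.trans hby.symm))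
          have h2' : s % n = j₀ % n := heqmod.trans hij3.symm
          have hdvd : n ∣ s - j₀ :=
            (Nat.modEq_iff_dvd' (by omega)).mp h2'.symm
          have := Nat.le_of_dvd (by omega) hdvd
          omega
      exact not_alternates hj0w hm hij2 (Or.inr rfl) hj0y rfl hbet
        (halt (w[(m - n) % n]'him2) (w[m]'hm) (Ne.symm hyx))

private lemma filter_single {x y : V} :
    ∀ {p : List V}, p.Nodup → y ∈ p → x ∉ p →
      p.filter (fun z => decide (z = x ∨ z = y)) = [y] := by
  intro p
  induction p with
  | nil => intro _ h; simp at h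
  | cons a p ih =>
    intro hnd hy hx
    rcases List.mem_cons.mp hy with h | h
    · subst h
      rw [List.filter_cons, if_pos (by simp)]
      congr 1
      rw [List.filter_eq_nil_iff]
      intro z hz
      simp only [decide_eq_true_eq]
      push_neg
      constructor
      · intro h; subst h; exact hx (List.mem_cons_of_mem _ hz)
      · intro h; subst h; exact (List.nodup_cons.mp hnd).1 hz
    · have hay : a ≠ y := by rintro rfl; exact (List.nodup_cons.mp hnd).1 h
      have hax : a ≠ x := by rintro rfl; exact hx List.mem_cons_self
      rw [List.filter_cons, if_neg (by simp [hax, hay])]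
      exact ih (List.nodup_cons.mp hnd).2 h (fun hc => hx (List.mem_cons_of_mem _ hc))

private lemma filter_pair {x y : V} (hxy : x ≠ y) :
    ∀ {p : List V}, p.Nodup → x ∈ p → y ∈ p →
      p.filter (fun z => decide (z = x ∨ z = y)) = [x, y] ∨
      p.filter (fun z => decide (z = x ∨ z = y)) = [y, x] := by
  intro p
  induction p with
  | nil => intro _ h; simp at h
  | cons a p ih =>
    intro hnd hx hy
    obtain ⟨hna, hnd'⟩ := List.nodup_cons.mp hnd
    by_cases hax : a = x
    · subst hax
      left
      rw [List.filter_cons, if_pos (by simp)]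
      have hyp : y ∈ p := by
        rcases List.mem_cons.mp hy with h | h
        · exact absurd h.symm hxy
        · exact h
      rw [filter_single hnd' hyp hna]
    · by_cases hay : a = y
      · subst hay
        right
        rw [List.filter_cons, if_pos (by simp)]
        have hxp : x ∈ p := by
          rcases List.mem_cons.mp hx with h | h
          · exact absurd h.symm hax
          · exact h
        have : p.filter (fun z => decide (z = x ∨ z = a)) =
            p.filter (fun z => decide (z = a ∨ z = x)) :=
          List.filter_congr (fun z _ => by simp [or_comm])
        rw [this, filter_single hnd' hxp hna]
      · rw [List.filter_cons, if_neg (by simp [hax, hay])]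
        exact ih hnd' ((List.mem_cons.mp hx).resolve_left (fun h => hax h.symm))
          ((List.mem_cons.mp hy).resolve_left (fun h => hay h.symm))

private lemma chain_cases {x y : V} (hxy : x ≠ y) {A B : List V}
    (hA : A = [x, y] ∨ A = [y, x]) (hB : B <+: A) : (A ++ B).Chain' (· ≠ ·) := by
  have hxy' : y ≠ x := hxy.symm
  rcases hA with rfl | rfl <;>
  · obtain ⟨t, ht⟩ := hB
    rcases B with _ | ⟨b1, B⟩
    · simp [List.Chain', List.isChain_cons_cons, hxy, hxy']
    rcases B with _ | ⟨b2, B⟩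
    · simp only [List.cons_append, List.nil_append, List.cons.injEq] at ht
      obtain ⟨rfl, -⟩ := ht
      simp [List.Chain', List.isChain_cons_cons, hxy, hxy']
    rcases B with _ | ⟨b3, B⟩
    · simp only [List.cons_append, List.cons.injEq] at ht
      obtain ⟨rfl, rfl, -⟩ := ht
      simp [List.Chain', List.isChain_cons_cons, hxy, hxy']
    · exfalso
      have h1 := congrArg List.length ht
      simp at h1

private lemma alternates_build {x y : V} (hxy : x ≠ y) {p : List V} (hnd : p.Nodup)
    (hx : x ∈ p) (hy : y ∈ p) (k : ℕ) : Alternates x y (p ++ p.take k) := by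
  unfold Alternates
  rw [List.filter_append]
  exact chain_cases hxy (filter_pair hxy hnd hx hy)
    (List.IsPrefix.filter _ (List.take_prefix k p))

private lemma getElem_build {p : List V} (hnd : p.Nodup) {n k : ℕ} (hlen : p.length = n)
    (hk : k ≤ n) : ∀ j (hj : j < (p ++ p.take k).length),
      (p ++ p.take k)[j] = p[j % n]'(by rw [hlen]; exact Nat.mod_lt _ (by
        simp only [List.length_append, List.length_take, hlen] at hj; omega)) := by
  intro j hj
  have hlen2 : (p ++ p.take k).length = n + min k n := by
    simp [List.length_take, hlen]
  have hnpos : 0 < n := by omega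
  by_cases hjn : j < n
  · rw [List.getElem_append_left (by omega)]
    exact (by congr 1; exact (Nat.mod_eq_of_lt hjn).symm)
  · have hjk : j < n + k := by omega
    rw [List.getElem_append_right (by omega)]
    rw [List.getElem_take]
    congr 1
    rw [hlen, Nat.mod_eq_sub_mod (by omega), Nat.mod_eq_of_lt (by omega)]

private lemma sqfree_build {p : List V} (hnd : p.Nodup) {n k : ℕ} (hlen : p.length = n)
    (hk : k < n) : SqFree (p ++ p.take k) := by
  rintro ⟨u, X, v, hX, heq⟩
  have hlX : 0 < X.length := List.length_pos_iff.mpr hX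
  set w := p ++ p.take k with hw
  have hwlen : w.length = n + min k n := by simp [hw, List.length_take, hlen]
  have hmin : min k n = k := min_eq_left (le_of_lt hk)
  have hlensum : w.length = u.length + X.length + X.length + v.length := by
    rw [heq]; simp; ring
  have hnpos : 0 < n := by omega
  -- w[u.length] = X[0] and w[u.length + X.length] = X[0]
  have h1 : u.length < w.length := by omega
  have h2 : u.length + X.length < w.length := by omega
  have heq1 : w = u ++ (X ++ (X ++ v)) := by rw [heq]; simp
  have hg1 : w[u.length]'h1 = X[0]'hlX := by
    rw [List.getElem_of_eq heq1 h1]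
    rw [List.getElem_append_right (le_refl _)]
    simp only [Nat.sub_self]
    rw [List.getElem_append_left hlX]
  have heq2 : w = (u ++ X) ++ (X ++ v) := by rw [heq]; simp
  have hg2 : w[u.length + X.length]'h2 = X[0]'hlX := by
    rw [List.getElem_of_eq heq2 h2]
    rw [List.getElem_append_right (by simp)]
    simp only [List.length_append, Nat.sub_self]
    rw [List.getElem_append_left hlX]
  have hq1 := getElem_build hnd hlen (le_of_lt hk) u.length h1
  have hq2 := getElem_build hnd hlen (le_of_lt hk) (u.length + X.length) h2
  have hmod : u.length % n = (u.length + X.length) % n := by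
    have := hq1.symm.trans (hg1.trans (hg2.symm.trans hq2))
    exact (hnd.getElem_inj_iff).mp this
  have hdvd : n ∣ X.length := by
    have := (Nat.modEq_iff_dvd' (by omega)).mp hmod
    simpa using this
  have := Nat.le_of_dvd hlX hdvd
  omega


end Helpers

set_option maxHeartbeats 1000000 in
theorem card_squarefree_words_representing_complete_graph
    {V : Type*} [DecidableEq V] [Fintype V] [Nonempty V] :
    {w : List V | SqFree w ∧ Represents (⊤ : SimpleGraph V) w}.ncard
      = Fintype.card V * Nat.factorial (Fintype.card V) := by
  classical
  set n := Fintype.card V with hn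
  have hnpos : 0 < n := Fintype.card_pos
  set F : (Fin n ≃ V) × Fin n → List V :=
    fun ek => List.ofFn ek.1 ++ (List.ofFn ek.1).take ek.2 with hF
  have hFinj : Function.Injective F := by
    rintro ⟨e, k⟩ ⟨e', k'⟩ h
    simp only [hF] at h
    have hlen := congrArg List.length h
    simp only [List.length_append, List.length_ofFn, List.length_take] at hlen
    have hkk : (k : ℕ) = (k' : ℕ) := by
      have := k.isLt; have := k'.isLt; omega
    obtain ⟨h1, -⟩ := List.append_inj h (by simp)
    have he : e = e' := DFunLike.coe_injective (List.ofFn_inj.mp h1)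
    subst he
    simp [Fin.ext_iff, hkk]
  have hset : {w : List V | SqFree w ∧ Represents (⊤ : SimpleGraph V) w} = Set.range F := by
    ext w
    simp only [Set.mem_setOf_eq, Set.mem_range]
    constructor
    · rintro ⟨hsf, hmem, hiff⟩
      have halt : ∀ x y : V, x ≠ y → Alternates x y w :=
        fun x y h => (hiff x y h).mpr ((SimpleGraph.top_adj x y).mpr h)
      have hnlen : n ≤ w.length := card_le_length hmem
      set p := w.take n with hp
      have hndp : p.Nodup := take_card_nodup hmem halt
      have hplen : p.length = n := by rw [hp, List.length_take]; omega
      have per := periodic hmem halt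
      have hget : ∀ {a b : ℕ} (ha : a < w.length) (hb : b < w.length), a = b →
          w[a] = w[b] := by intro a b ha hb h; subst h; rfl
      have hptow : ∀ a (ha : a < p.length), p[a] =
          w[a]'(by rw [hplen] at ha; omega) := by
        intro a ha
        exact List.getElem_take
      have hL2 : w.length < 2 * n := by
        by_contra hL
        push_neg at hL
        apply hsf
        refine ⟨[], p, w.drop (2 * n), ?_, ?_⟩
        · intro h; rw [h] at hplen; simp at hplen; omega
        · have htake : w.take (2 * n) = p ++ p := by
            apply List.ext_getElem
            · simp only [List.length_take, List.length_append, hplen]; omega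
            · intro j h1 h2
              have hjlen : j < w.length := by rw [List.length_take] at h1; omega
              have hj2 : j < 2 * n := by rw [List.length_take] at h1; omega
              have hmodlt : j % n < n := Nat.mod_lt _ hnpos
              have hmodw : j % n < w.length := by omega
              have hrhs : (p ++ p)[j]'h2 = w[j % n]'hmodw := by
                by_cases hjn : j < n
                · rw [List.getElem_append_left (by rw [hplen]; omega)]
                  exact (hptow j (by omega)).trans
                    (hget hjlen hmodw (Nat.mod_eq_of_lt hjn).symm)
                · rw [List.getElem_append_right (by rw [hplen]; omega)]
                  refine (hptow (j - p.length) (by rw [hplen]; omega)).trans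
                    (hget (by rw [hplen]; omega) hmodw ?_)
                  rw [hplen, Nat.mod_eq_sub_mod (by omega), Nat.mod_eq_of_lt (by omega)]
              rw [List.getElem_take]
              exact (per j hjlen).trans hrhs.symm
          calc w = w.take (2 * n) ++ w.drop (2 * n) := (List.take_append_drop _ _).symm
            _ = [] ++ p ++ p ++ w.drop (2 * n) := by rw [htake]; simp
      have hk : w.length - n < n := by omega
      have hjlt : ∀ j : Fin n, (j : ℕ) < p.length := by
        intro j; rw [hplen]; exact j.isLt
      set g : Fin n → V := fun j => p[(j : ℕ)]'(hjlt j) with hg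
      have hginj : Function.Injective g := by
        intro a b h
        exact Fin.ext ((hndp.getElem_inj_iff).mp h)
      have hgbij : Function.Bijective g :=
        (Fintype.bijective_iff_injective_and_card g).mpr ⟨hginj, by simp [hn]⟩
      refine ⟨⟨Equiv.ofBijective g hgbij, ⟨w.length - n, hk⟩⟩, ?_⟩
      show List.ofFn ⇑(Equiv.ofBijective g hgbij) ++
        (List.ofFn ⇑(Equiv.ofBijective g hgbij)).take (w.length - n) = w
      have hofn : List.ofFn ⇑(Equiv.ofBijective g hgbij) = p := by
        apply List.ext_getElem
        · simp [hplen]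
        · intro j h1 h2
          rw [List.getElem_ofFn]
          rfl
      rw [hofn]
      apply List.ext_getElem
      · simp only [List.length_append, List.length_take, hplen]; omega
      · intro j h1 h2
        have hmodlt : j % n < n := Nat.mod_lt _ hnpos
        have hmodw : j % n < w.length := by omega
        refine (getElem_build hndp hplen (le_of_lt hk) j h1).trans ?_
        exact (hptow (j % n) (by omega)).trans (per j h2).symm
    · rintro ⟨⟨e, k⟩, rfl⟩
      have hnd : (List.ofFn ⇑e).Nodup := List.nodup_ofFn.mpr e.injective
      have hlenp : (List.ofFn ⇑e).length = n := by simp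
      have hmemp : ∀ v : V, v ∈ List.ofFn ⇑e := by
        intro v
        rw [List.mem_ofFn]
        exact e.surjective v
      refine ⟨sqfree_build hnd hlenp k.isLt, ?_, ?_⟩
      · intro v
        exact List.mem_append_left _ (hmemp v)
      · intro x y hxy
        constructor
        · intro _; exact (SimpleGraph.top_adj x y).mpr hxy
        · intro _; exact alternates_build hxy hnd (hmemp x) (hmemp y) _
  rw [hset, ← Set.image_univ, Set.ncard_image_of_injective _ hFinj, Set.ncard_univ,
    Nat.card_eq_fintype_card, Fintype.card_prod, Fintype.card_fin,
    Fintype.card_equiv (Fintype.equivFin V).symm, Fintype.card_fin]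
  rw [Nat.mul_comm]
end

section
/- Let G be a connected simple graph on a finite vertex set V with at least two vertices, and let w be a k-uniform word (k ≥ 1) representing G. Then for all i ≠ j with 1 ≤ i, j ≤ k, the last letter of P_i(w) is different from the first letter of P_j(w); moreover, for every i with 1 ≤ i ≤ k, the first letter of w is different from the last letter of P_i(w), and the last letter of w is different from the first letter of P_i(w). -/
variable {V : Type*} [DecidableEq V]

/-- `w` is `k`-uniform: every letter of `V` occurs exactly `k` times. -/
def KUniform (k : ℕ) (w : List V) : Prop := ∀ v : V, w.count v = k

/-- The representation number of `G` is `k`: `k` is the least number such that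
some `k`-uniform word represents `G`. -/
def RepNumIs (G : SimpleGraph V) (k : ℕ) : Prop :=
  (∃ w : List V, KUniform k w ∧ Represents G w) ∧
    ∀ k' : ℕ, (∃ w : List V, KUniform k' w ∧ Represents G w) → k ≤ k'

/-- The `i`-th permutation `P_i(w)` (for `1 ≤ i`): keep, for each letter, only
its `i`-th occurrence in `w`. -/
def NthPerm (i : ℕ) (w : List V) : List V :=
  ((w.zipIdx.map Prod.swap).filter fun p => decide ((w.take (p.1 + 1)).count p.2 = i)).map Prod.snd

/-! ### Auxiliary lemmas -/

lemma count_take_mono (w : List V) (v : V) {m n : ℕ} (h : m ≤ n) :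
    (w.take m).count v ≤ (w.take n).count v := by
  have : w.take m = (w.take n).take m := by rw [List.take_take, Nat.min_eq_left h]
  rw [this]
  exact (List.take_sublist _ _).count_le v

/-- The alternation invariant: in a word with letters from `{a,b}`, no two equal
consecutive letters, starting with `a` (if nonempty), every prefix has
`count b ≤ count a ≤ count b + 1`. -/
lemma alt_inv (u : List V) : ∀ a b : V, a ≠ b → u.Chain' (· ≠ ·) →
    (∀ z ∈ u, z = a ∨ z = b) → (∀ c, u.head? = some c → c = a) →
    ∀ n, (u.take n).count b ≤ (u.take n).count a ∧
         (u.take n).count a ≤ (u.take n).count b + 1 := by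
  induction u with
  | nil => intro a b _ _ _ _ n; simp
  | cons c t ih =>
    intro a b hab hch hmem hhd n
    have hca : c = a := hhd c rfl
    subst hca
    have hch' : t.Chain' (· ≠ ·) := (List.isChain_cons.mp hch).2
    have hhd' : ∀ c', t.head? = some c' → c' = b := by
      intro c' hc'
      have h1 : c ≠ c' := (List.isChain_cons.mp hch).1 c' hc'
      rcases hmem c' (List.mem_cons_of_mem _ (List.mem_of_mem_head? hc')) with h | h
      · exact absurd h.symm h1
      · exact h
    have hmem' : ∀ z ∈ t, z = b ∨ z = c := by
      intro z hz
      rcases hmem z (List.mem_cons_of_mem _ hz) with h | h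
      · exact Or.inr h
      · exact Or.inl h
    have IH := ih b c hab.symm hch' hmem' hhd'
    cases n with
    | zero => simp
    | succ m =>
      have h1 : (c :: t).take (m+1) = c :: t.take m := rfl
      rw [h1]
      rw [List.count_cons_self, List.count_cons_of_ne hab]
      obtain ⟨h2, h3⟩ := IH m
      omega

/-- Count transfer: if the filtered word starts with `x`, then in every prefix
of `w`, `y` occurs at most as often as `x`. -/
lemma alt_count_le {w : List V} {x y : V} (hxy : x ≠ y) (halt : Alternates x y w)
    (hhead : ∀ c, (w.filter fun z => decide (z = x ∨ z = y)).head? = some c → c = x)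
    (m : ℕ) : (w.take m).count y ≤ (w.take m).count x := by
  set u := w.filter fun z => decide (z = x ∨ z = y) with hu
  have hmem : ∀ z ∈ u, z = x ∨ z = y := by
    intro z hz
    have := (List.mem_filter.mp hz).2
    simpa using this
  have hinv := alt_inv u x y hxy halt hmem hhead
  set s := (w.take m).filter fun z => decide (z = x ∨ z = y) with hs
  have hpre : s <+: u := List.IsPrefix.filter _ (List.take_prefix m w)
  have hse : s = u.take s.length := List.prefix_iff_eq_take.mp hpre
  have hcx : (w.take m).count x = s.count x := by
    rw [hs, List.count_filter (by simp)]
  have hcy : (w.take m).count y = s.count y := by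
    rw [hs, List.count_filter (by simp)]
  rw [hcx, hcy, hse]
  exact (hinv s.length).1

lemma filter_or_comm (x y : V) (w : List V) :
    (w.filter fun z => decide (z = y ∨ z = x)) = (w.filter fun z => decide (z = x ∨ z = y)) :=
  List.filter_congr fun z _ => by rw [decide_eq_decide]; exact or_comm

/-- Key contradiction lemma: if `x` and `y` alternate in `w`, the `i`-th
occurrence of `y` cannot precede the `i`-th occurrence of `x` while the
`j`-th occurrence of `x` precedes the `j`-th occurrence of `y`. -/
lemma alt_contra {w : List V} {x y : V} (hxy : x ≠ y)
    (halt : Alternates x y w) {i j p q p' q' : ℕ}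
    (hi : 1 ≤ i) (hj : 1 ≤ j)
    (hp : w[p]? = some x) (hpc : (w.take (p+1)).count x = i)
    (hq : w[q]? = some y) (hqc : (w.take (q+1)).count y = i)
    (hp' : w[p']? = some x) (hpc' : (w.take (p'+1)).count x = j)
    (hq' : w[q']? = some y) (hqc' : (w.take (q'+1)).count y = j)
    (h1 : q < p) (h2 : p' < q') : False := by
  set u := w.filter fun z => decide (z = x ∨ z = y) with hudef
  -- u is nonempty since x occurs in w
  have hxw : x ∈ w := by
    obtain ⟨h, h'⟩ := List.getElem?_eq_some_iff.mp hp
    exact h' ▸ List.getElem_mem h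
  have hxu : x ∈ u := List.mem_filter.mpr ⟨hxw, by simp⟩
  have hune : u ≠ [] := List.ne_nil_of_mem hxu
  obtain ⟨a, ha⟩ : ∃ a, u.head? = some a := ⟨u.head hune, List.head?_eq_head hune⟩
  have haxy : a = x ∨ a = y := by
    have : a ∈ u := List.mem_of_mem_head? ha
    simpa using (List.mem_filter.mp this).2
  -- count of x in w.take p
  have htp : (w.take (p+1)).count x = (w.take p).count x + 1 := by
    rw [List.take_succ, hp, List.count_append]
    simp
  have htq' : (w.take (q'+1)).count y = (w.take q').count y + 1 := by
    rw [List.take_succ, hq', List.count_append]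
    simp
  rcases haxy with hax | hay
  · -- head is x: count y ≤ count x on all prefixes
    have hle := alt_count_le hxy halt
      (fun c hc => by rw [ha] at hc; rw [← hax]; exact (Option.some.inj hc).symm) (q+1)
    rw [hqc] at hle
    have : (w.take (q+1)).count x ≤ (w.take p).count x := count_take_mono w x (by omega)
    omega
  · -- head is y: count x ≤ count y on all prefixes
    have halt' : Alternates y x w := by
      unfold Alternates at halt ⊢
      rw [filter_or_comm]
      exact halt
    have hle := alt_count_le hxy.symm halt'
      (fun c hc => by
        rw [filter_or_comm, ← hudef, ha] at hc
        rw [← hay]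
        exact (Option.some.inj hc).symm) (p'+1)
    rw [hpc'] at hle
    have : (w.take (p'+1)).count y ≤ (w.take q').count y := count_take_mono w y (by omega)
    omega

/-- The underlying indexed list of `NthPerm`. -/
def permList (i : ℕ) (w : List V) : List (ℕ × V) :=
  (w.zipIdx.map Prod.swap).filter fun p => decide ((w.take (p.1 + 1)).count p.2 = i)

lemma nthPerm_eq (i : ℕ) (w : List V) :
    NthPerm i w = (permList i w).map Prod.snd := rfl

lemma mem_permList {i : ℕ} {w : List V} {p : ℕ} {v : V} :
    (p, v) ∈ permList i w ↔ w[p]? = some v ∧ (w.take (p+1)).count v = i := by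
  rw [permList, List.mem_filter]
  simp [List.mk_mem_zipIdx_iff_getElem?]

lemma permList_pairwise (i : ℕ) (w : List V) :
    (permList i w).Pairwise (fun a b => a.1 < b.1) := by
  apply List.Pairwise.sublist List.filter_sublist
  have : List.Pairwise (· < ·) ((w.zipIdx.map Prod.swap).map Prod.fst) := by
    rw [List.map_map]
    show List.Pairwise (· < ·) (w.zipIdx.map Prod.snd)
    rw [List.zipIdx_map_snd, ← List.range_eq_range']
    exact List.pairwise_lt_range
  exact List.pairwise_map.mp this

/-- Existence of the `i`-th occurrence. -/
lemma exists_occ {w : List V} {v : V} {i : ℕ} (hi : 1 ≤ i) (hc : i ≤ w.count v) :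
    ∃ p, w[p]? = some v ∧ (w.take (p+1)).count v = i := by
  classical
  have hex : ∃ m, i ≤ (w.take m).count v := ⟨w.length, by simpa using hc⟩
  set m := Nat.find hex with hmdef
  have hm : i ≤ (w.take m).count v := Nat.find_spec hex
  have hmpos : 1 ≤ m := by
    by_contra h
    have hm0 : m = 0 := by omega
    rw [hm0] at hm; simp at hm; omega
  have hlt : ¬ i ≤ (w.take (m-1)).count v := Nat.find_min hex (by omega)
  have hmle : m ≤ w.length := Nat.find_min' hex (by simpa using hc)
  have hm1 : m - 1 + 1 = m := by omega
  have hmlen : m - 1 < w.length := by omega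
  have hget : w[m-1]? = some w[m-1] := List.getElem?_eq_getElem hmlen
  have hts : w.take m = w.take (m-1) ++ [w[m-1]] := by
    conv_lhs => rw [← hm1]
    rw [List.take_succ, hget]
    rfl
  by_cases hv : w[m-1] = v
  · refine ⟨m-1, by rw [hget, hv], ?_⟩
    rw [hm1, hts, List.count_append]
    rw [hts, List.count_append] at hm
    have hcv : List.count v [w[m-1]] = 1 := by rw [hv]; simp
    omega
  · exfalso
    apply hlt
    rw [hts, List.count_append] at hm
    have hcv : List.count v [w[m-1]] = 0 :=
      List.count_eq_zero.mpr (by simp; exact fun h => hv h.symm)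
    omega

lemma exists_mem_permList {w : List V} {k : ℕ} (hu : KUniform k w)
    {i : ℕ} (hi : 1 ≤ i) (hik : i ≤ k) (v : V) :
    ∃ p, (p, v) ∈ permList i w := by
  obtain ⟨p, h1, h2⟩ := exists_occ hi (by rw [hu v]; exact hik)
  exact ⟨p, mem_permList.mpr ⟨h1, h2⟩⟩

lemma pairwise_head_lt {α : Type*} {R : α → α → Prop} {L : List α} {e a : α}
    (hP : L.Pairwise R) (he : L.head? = some e) (ha : a ∈ L) : a = e ∨ R e a := by
  cases L with
  | nil => simp at he
  | cons c t =>
    obtain rfl : c = e := by simpa using he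
    rcases List.mem_cons.mp ha with h | h
    · exact Or.inl h
    · exact Or.inr ((List.pairwise_cons.mp hP).1 a h)

lemma pairwise_getLast_lt {α : Type*} {R : α → α → Prop} {L : List α} {e a : α}
    (hP : L.Pairwise R) (he : L.getLast? = some e) (ha : a ∈ L) : a = e ∨ R a e := by
  have hP' : L.reverse.Pairwise (fun a b => R b a) := List.pairwise_reverse.mpr hP
  have he' : L.reverse.head? = some e := by rw [List.head?_reverse]; exact he
  exact pairwise_head_lt hP' he' (List.mem_reverse.mpr ha)

theorem nthPerm_last_ne_first {V : Type*} [DecidableEq V] [Fintype V]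
    (G : SimpleGraph V) (hconn : G.Connected) (hcard : 2 ≤ Fintype.card V)
    (k : ℕ) (hk : 1 ≤ k)
    (w : List V) (hu : KUniform k w) (hw : Represents G w) :
    (∀ i j : ℕ, 1 ≤ i → i ≤ k → 1 ≤ j → j ≤ k → i ≠ j →
        (NthPerm i w).getLast? ≠ (NthPerm j w).head?) ∧
      (∀ i : ℕ, 1 ≤ i → i ≤ k →
        w.head? ≠ (NthPerm i w).getLast? ∧ w.getLast? ≠ (NthPerm i w).head?) := by
  classical
  -- every vertex has a neighbor
  have hnbr : ∀ x : V, ∃ y : V, G.Adj x y := by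
    intro x
    obtain ⟨z, hz⟩ := Fintype.exists_ne_of_one_lt_card (by omega) x
    obtain ⟨wk⟩ := (hconn x z)
    cases wk with
    | nil => exact absurd rfl hz.symm
    | cons h _ => exact ⟨_, h⟩
  have hVne : Nonempty V := Fintype.card_pos_iff.mp (by omega)
  obtain ⟨v0⟩ := hVne
  have hwne : w ≠ [] := List.ne_nil_of_mem (hw.1 v0)
  -- main uniform statement
  have key : ∀ i j : ℕ, 1 ≤ i → i ≤ k → 1 ≤ j → j ≤ k →
      (NthPerm i w).getLast? ≠ (NthPerm j w).head? := by
    intro i j hi hik hj hjk heq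
    -- both permutations are nonempty
    obtain ⟨pi0, hpi0⟩ := exists_mem_permList hu hi hik v0
    have hne_i : permList i w ≠ [] := List.ne_nil_of_mem hpi0
    have hne_i' : NthPerm i w ≠ [] := by
      rw [nthPerm_eq]; simpa using hne_i
    obtain ⟨x, hx⟩ : ∃ x, (NthPerm i w).getLast? = some x :=
      ⟨_, List.getLast?_eq_getLast hne_i'⟩
    have hxj : (NthPerm j w).head? = some x := by rw [← heq, hx]
    -- extract last pair of permList i
    have hgl : (permList i w).getLast? = some ((permList i w).getLast hne_i) :=
      List.getLast?_eq_getLast hne_i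
    set pr := (permList i w).getLast hne_i with hprdef
    have hprx : pr.2 = x := by
      have : (NthPerm i w).getLast? = some pr.2 := by
        rw [nthPerm_eq, List.getLast?_map, hgl]; rfl
      rw [hx] at this
      exact (Option.some.inj this).symm
    have hprmem : pr ∈ permList i w := List.getLast_mem hne_i
    -- extract head pair of permList j
    have hne_j' : NthPerm j w ≠ [] := by
      intro h; rw [h] at hxj; simp at hxj
    have hne_j : permList j w ≠ [] := by
      intro h; apply hne_j'; rw [nthPerm_eq, h]; rfl
    obtain ⟨pr', hpr'⟩ : ∃ a, (permList j w).head? = some a :=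
      ⟨_, List.head?_eq_head hne_j⟩
    have hpr'x : pr'.2 = x := by
      have : (NthPerm j w).head? = some pr'.2 := by
        rw [nthPerm_eq, List.head?_map, hpr']; rfl
      rw [hxj] at this
      exact (Option.some.inj this).symm
    have hpr'mem : pr' ∈ permList j w := List.mem_of_mem_head? hpr'
    -- neighbor y of x
    obtain ⟨y, hyadj⟩ := hnbr x
    have hxy : x ≠ y := hyadj.ne
    have halt : Alternates x y w := (hw.2 x y hxy).mpr hyadj
    -- y's i-th and j-th occurrences
    obtain ⟨q, hq⟩ := exists_mem_permList hu hi hik y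
    obtain ⟨q', hq'⟩ := exists_mem_permList hu hj hjk y
    -- position comparisons
    have h1 : q < pr.1 := by
      rcases pairwise_getLast_lt (permList_pairwise i w) hgl hq with h | h
      · exfalso; apply hxy; rw [← hprx, ← h]
      · exact h
    have h2 : pr'.1 < q' := by
      rcases pairwise_head_lt (permList_pairwise j w) hpr' hq' with h | h
      · exfalso; apply hxy; rw [← hpr'x, ← h]
      · exact h
    obtain ⟨hpm1, hpm2⟩ := mem_permList.mp hprmem
    obtain ⟨hpm1', hpm2'⟩ := mem_permList.mp hpr'mem
    obtain ⟨hqm1, hqm2⟩ := mem_permList.mp hq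
    obtain ⟨hqm1', hqm2'⟩ := mem_permList.mp hq'
    rw [hprx] at hpm1 hpm2
    rw [hpr'x] at hpm1' hpm2'
    exact alt_contra hxy halt hi hj hpm1 hpm2 hqm1 hqm2 hpm1' hpm2' hqm1' hqm2' h1 h2
  refine ⟨fun i j hi hik hj hjk _ => key i j hi hik hj hjk, fun i hi hik => ?_⟩
  constructor
  · -- w.head? ≠ (NthPerm i w).getLast?
    intro heq
    obtain ⟨z, hz⟩ : ∃ z, w.head? = some z := ⟨w.head hwne, List.head?_eq_head hwne⟩
    have hzl : (NthPerm i w).getLast? = some z := by rw [← heq, hz]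
    -- last pair of permList i
    have hne_i : permList i w ≠ [] := by
      intro h
      rw [nthPerm_eq, h] at hzl
      simp at hzl
    have hgl : (permList i w).getLast? = some ((permList i w).getLast hne_i) :=
      List.getLast?_eq_getLast hne_i
    set pr := (permList i w).getLast hne_i with hprdef
    have hprz : pr.2 = z := by
      have : (NthPerm i w).getLast? = some pr.2 := by
        rw [nthPerm_eq, List.getLast?_map, hgl]; rfl
      rw [hzl] at this
      exact (Option.some.inj this).symm
    have hprmem : pr ∈ permList i w := List.getLast_mem hne_i
    obtain ⟨y, hyadj⟩ := hnbr z
    have hzy : z ≠ y := hyadj.ne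
    have halt : Alternates z y w := (hw.2 z y hzy).mpr hyadj
    obtain ⟨q, hq⟩ := exists_mem_permList hu hi hik y
    obtain ⟨q1, hq1⟩ := exists_mem_permList hu (le_refl 1) hk y
    have h1 : q < pr.1 := by
      rcases pairwise_getLast_lt (permList_pairwise i w) hgl hq with h | h
      · exfalso; apply hzy; rw [← hprz, ← h]
      · exact h
    obtain ⟨hqm1, hqm2⟩ := mem_permList.mp hq
    obtain ⟨hqm11, hqm12⟩ := mem_permList.mp hq1
    obtain ⟨hpm1, hpm2⟩ := mem_permList.mp hprmem
    rw [hprz] at hpm1 hpm2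
    -- z's first occurrence is at position 0
    have hz0 : w[0]? = some z := by rw [← List.head?_eq_getElem?]; exact hz
    have hz0c : (w.take 1).count z = 1 := by
      rw [List.take_succ, hz0]
      simp
    have h2 : 0 < q1 := by
      rcases Nat.eq_zero_or_pos q1 with h | h
      · exfalso
        rw [h, hz0] at hqm11
        exact hzy (Option.some.inj hqm11)
      · exact h
    exact alt_contra hzy halt hi (le_refl 1) hpm1 hpm2 hqm1 hqm2
      (by simpa using hz0) (by simpa using hz0c) hqm11 hqm12 h1 h2
  · -- w.getLast? ≠ (NthPerm i w).head?
    intro heq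
    obtain ⟨z, hz⟩ : ∃ z, w.getLast? = some z :=
      ⟨w.getLast hwne, List.getLast?_eq_getLast hwne⟩
    have hzh : (NthPerm i w).head? = some z := by rw [← heq, hz]
    have hne_i : permList i w ≠ [] := by
      intro h
      rw [nthPerm_eq, h] at hzh
      simp at hzh
    obtain ⟨pr', hpr'⟩ : ∃ a, (permList i w).head? = some a :=
      ⟨_, List.head?_eq_head hne_i⟩
    have hpr'z : pr'.2 = z := by
      have : (NthPerm i w).head? = some pr'.2 := by
        rw [nthPerm_eq, List.head?_map, hpr']; rfl
      rw [hzh] at this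
      exact (Option.some.inj this).symm
    have hpr'mem : pr' ∈ permList i w := List.mem_of_mem_head? hpr'
    obtain ⟨y, hyadj⟩ := hnbr z
    have hzy : z ≠ y := hyadj.ne
    have halt : Alternates z y w := (hw.2 z y hzy).mpr hyadj
    obtain ⟨q', hq'⟩ := exists_mem_permList hu hi hik y
    obtain ⟨qk, hqk⟩ := exists_mem_permList hu hk (le_refl k) y
    have h2 : pr'.1 < q' := by
      rcases pairwise_head_lt (permList_pairwise i w) hpr' hq' with h | h
      · exfalso; apply hzy; rw [← hpr'z, ← h]
      · exact h
    obtain ⟨hqm1', hqm2'⟩ := mem_permList.mp hq'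
    obtain ⟨hqk1, hqk2⟩ := mem_permList.mp hqk
    obtain ⟨hpm1', hpm2'⟩ := mem_permList.mp hpr'mem
    rw [hpr'z] at hpm1' hpm2'
    -- last position of w
    have hLpos : 1 ≤ w.length := List.length_pos_iff.mpr hwne
    have hzL : w[w.length - 1]? = some z := by
      rw [← List.getLast?_eq_getElem?]; exact hz
    have hzLc : (w.take (w.length - 1 + 1)).count z = k := by
      have : w.length - 1 + 1 = w.length := by omega
      rw [this, List.take_length]
      exact hu z
    have hqklen : qk < w.length := (List.getElem?_eq_some_iff.mp hqk1).1
    have h1 : qk < w.length - 1 := by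
      rcases Nat.lt_or_ge qk (w.length - 1) with h | h
      · exact h
      · exfalso
        have : qk = w.length - 1 := by omega
        rw [this, hzL] at hqk1
        exact hzy (Option.some.inj hqk1)
    exact alt_contra hzy halt hk hi hzL hzLc hqk1 hqk2 hpm1' hpm2' hqm1' hqm2' h1 h2
end

section
/- Let G be a connected word-representable simple graph on a vertex set V of size n whose representation number is k with k ≥ 3, let w be a k-uniform word representing G, and set P_1 = P_1(w), P_2 = P_2(w), P_3 = P_3(w). Let w' = h(c) be the infinite word obtained by applying the substitution h (with h(2) = P_1, h(1) = P_2, h(0) = P_3) to the square-free string c derived from the Thue–Morse sequence. Then for every natural number i, the word w ++ w'[n·i] represents G. -/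
variable {V : Type*} [DecidableEq V]

/-- The Thue–Morse sequence `t = t₁t₂t₃⋯`: `tm n = 0` iff the number of `1`s in
the binary expansion of `n` is even. -/
def tm (n : ℕ) : ℕ := ((Nat.digits 2 n).count 1) % 2

/-- The square-free string `c = c₁c₂c₃⋯` over `{0,1,2}` derived from the
Thue–Morse sequence: `cseq m` (`0`-indexed, so `cseq (m-1) = c_m`) is the number
of `1`s between the `(m+1)`-st and `(m+2)`-nd occurrences of `0` in `t₁t₂t₃⋯`. -/
noncomputable def cseq (m : ℕ) : ℕ :=
  Nat.nth (fun n => 1 ≤ n ∧ tm n = 0) (m + 1) - Nat.nth (fun n => 1 ≤ n ∧ tm n = 0) m - 1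

/-! ### Auxiliary machinery -/

/-- alternating word `(ab)^m` -/
def altL (a b : V) : ℕ → List V
  | 0 => []
  | m+1 => a :: b :: altL a b m

/-- recursive nth-occurrence extractor with already-read prefix `u` as state -/
def np (i : ℕ) : List V → List V → List V
  | _, [] => []
  | u, c :: t => if u.count c + 1 = i then c :: np i (u ++ [c]) t else np i (u ++ [c]) t

lemma np_spec (i : ℕ) : ∀ (l u : List V),
    ((((l.zipIdx u.length).map Prod.swap).filter fun p =>
        decide (((u ++ l).take (p.1 + 1)).count p.2 = i)).map Prod.snd) = np i u l
  | [], u => by simp [np]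
  | a :: t, u => by
    have h1 : (u ++ a :: t).take (u.length + 1) = u ++ [a] := by
      rw [show u ++ a :: t = (u ++ [a]) ++ t by simp]
      exact List.take_left' (by simp)
    have h2 : u ++ a :: t = (u ++ [a]) ++ t := by simp
    have h3 : u.length + 1 = (u ++ [a]).length := by simp
    rw [List.zipIdx_cons, List.map_cons, List.filter_cons]
    by_cases hc : u.count a + 1 = i
    · rw [if_pos (by simp [h1, List.count_append, hc])]
      rw [List.map_cons, h2, h3, np_spec i t (u ++ [a])]
      simp [np, hc]
    · rw [if_neg (by simp [h1, List.count_append, hc])]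
      rw [h2, h3, np_spec i t (u ++ [a])]
      simp [np, hc]

lemma nthPerm_eq_np (i : ℕ) (w : List V) : NthPerm i w = np i [] w := by
  have := np_spec i w ([] : List V)
  simpa [NthPerm] using this

lemma np_filter (A : V → Bool) (i : ℕ) : ∀ (l u : List V),
    (np i u l).filter A = np i (u.filter A) (l.filter A)
  | [], u => by simp [np]
  | a :: t, u => by
    by_cases h : A a
    · have hc : (u.filter A).count a = u.count a := List.count_filter h
      have hu : (u ++ [a]).filter A = u.filter A ++ [a] := by simp [h]
      by_cases hi : u.count a + 1 = i
      · simp only [np, if_pos hi, List.filter_cons, h, if_pos, List.filter_cons_of_pos]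
        rw [np_filter A i t (u ++ [a]), hu]
        simp [np, hc, hi, List.filter_cons_of_pos, h]
      · simp only [np, if_neg hi]
        rw [np_filter A i t (u ++ [a]), hu]
        simp [np, hc, hi, List.filter_cons_of_pos, h]
    · have hu : (u ++ [a]).filter A = u.filter A := by
        simp [List.filter_append, List.filter_cons, h]
      have hl : (a :: t).filter A = t.filter A := by simp [List.filter_cons, h]
      have : (np i u (a :: t)).filter A = (np i (u ++ [a]) t).filter A := by
        by_cases hi : u.count a + 1 = i <;>
          simp [np, hi, List.filter_cons, h]
      rw [this, np_filter A i t (u ++ [a]), hu, hl]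

lemma np_cons (i : ℕ) (u : List V) (c : V) (t : List V) :
    np i u (c :: t) = if u.count c + 1 = i then c :: np i (u ++ [c]) t
      else np i (u ++ [c]) t := rfl

lemma np_altL_nil {a b : V} (hab : a ≠ b) (i : ℕ) : ∀ (m : ℕ) (u : List V),
    u.count a = u.count b → i ≤ u.count a → np i u (altL a b m) = []
  | 0, u => fun _ _ => by simp [altL, np]
  | m+1, u => by
    intro hcnt hle
    have caa : List.count a [a] = 1 := by simp
    have cba : List.count b [a] = 0 := List.count_eq_zero.mpr (by simp [hab.symm])
    have cab : List.count a [b] = 0 := List.count_eq_zero.mpr (by simp [hab])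
    have cbb : List.count b [b] = 1 := by simp
    have e1 : (u ++ [a]).count b = u.count b := by
      simp [List.count_append, cba]
    have e2 : (u ++ [a] ++ [b]).count a = u.count a + 1 := by
      simp [List.count_append, caa, cab]
    have e3 : (u ++ [a] ++ [b]).count b = u.count b + 1 := by
      simp [List.count_append, List.count_cons, hab, hab.symm]
    have h1 : ¬ (u.count a + 1 = i) := by omega
    have h3 : ¬ ((u ++ [a]).count b + 1 = i) := by omega
    show np i u (a :: b :: altL a b m) = []
    rw [np_cons, if_neg h1, np_cons, if_neg h3]
    exact np_altL_nil hab i m _ (by omega) (by omega)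

lemma np_altL {a b : V} (hab : a ≠ b) (i : ℕ) : ∀ (m : ℕ) (u : List V),
    u.count a = u.count b → u.count a < i → i ≤ u.count a + m →
    np i u (altL a b m) = [a, b]
  | 0, u => fun _ h1 h2 => by omega
  | m+1, u => by
    intro hcnt hlt hle
    have caa : List.count a [a] = 1 := by simp
    have cba : List.count b [a] = 0 := List.count_eq_zero.mpr (by simp [hab.symm])
    have cab : List.count a [b] = 0 := List.count_eq_zero.mpr (by simp [hab])
    have cbb : List.count b [b] = 1 := by simp
    have e1 : (u ++ [a]).count b = u.count b := by
      simp [List.count_append, cba]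
    have e2 : (u ++ [a] ++ [b]).count a = u.count a + 1 := by
      simp [List.count_append, caa, cab]
    have e3 : (u ++ [a] ++ [b]).count b = u.count b + 1 := by
      simp [List.count_append, List.count_cons, hab, hab.symm]
    show np i u (a :: b :: altL a b m) = [a, b]
    by_cases hi : u.count a + 1 = i
    · have h3 : (u ++ [a]).count b + 1 = i := by omega
      rw [np_cons, if_pos hi, np_cons, if_pos h3,
        np_altL_nil hab i m _ (by omega) (by omega)]
    · have h3 : ¬ ((u ++ [a]).count b + 1 = i) := by omega
      rw [np_cons, if_neg hi, np_cons, if_neg h3]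
      exact np_altL hab i m _ (by omega) (by omega) (by omega)

lemma altL_chain_cons {a b : V} (hab : a ≠ b) :
    ∀ m : ℕ, (b :: altL a b m).Chain' (· ≠ ·)
  | 0 => by exact List.isChain_singleton b
  | m+1 => by
    show (b :: a :: b :: altL a b m).IsChain (· ≠ ·)
    rw [List.isChain_cons_cons, List.isChain_cons_cons]
    exact ⟨hab.symm, hab, altL_chain_cons hab m⟩

lemma altL_chain {a b : V} (hab : a ≠ b) (m : ℕ) : (altL a b m).Chain' (· ≠ ·) := by
  cases m with
  | zero => exact List.isChain_nil
  | succ m =>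
    show (a :: b :: altL a b m).IsChain (· ≠ ·)
    rw [List.isChain_cons_cons]
    exact ⟨hab, altL_chain_cons hab m⟩

lemma altL_append (a b : V) : ∀ m n : ℕ, altL a b m ++ altL a b n = altL a b (m + n)
  | 0, n => by simp [altL]
  | m+1, n => by
    rw [show m + 1 + n = (m + n) + 1 by omega]
    show a :: b :: (altL a b m ++ altL a b n) = altL a b ((m + n) + 1)
    rw [altL_append a b m n]
    rfl

lemma alt_struct_cons {x y : V} (hxy : x ≠ y) : ∀ (m : ℕ) (t : List V),
    (∀ z ∈ x :: t, z = x ∨ z = y) → (x :: t).Chain' (· ≠ ·) →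
    (x :: t).count x = m + 1 → (x :: t).count y = m + 1 →
    x :: t = altL x y (m + 1)
  | m, t => by
    intro hmem hch hcx hcy
    have hty : t.count y = m + 1 := by
      have h := hcy
      rw [List.count_cons] at h
      simpa [hxy] using h
    have htx : t.count x = m := by
      have h := hcx
      rw [List.count_cons] at h
      simp at h
      omega
    obtain ⟨t', rfl⟩ : ∃ t', t = y :: t' := by
      cases t with
      | nil => exact absurd hty (by simp)
      | cons b t' =>
        have hbx : x ≠ b := (List.isChain_cons_cons.mp hch).1
        rcases hmem b (by simp) with h | h
        · exact absurd h.symm hbx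
        · exact ⟨t', by rw [h]⟩
    have ht'x : t'.count x = m := by
      have h := htx
      rw [List.count_cons] at h
      simpa [hxy.symm] using h
    have ht'y : t'.count y = m := by
      have h := hty
      rw [List.count_cons] at h
      simp at h
      omega
    cases m with
    | zero =>
      have ht' : t' = [] := by
        cases t' with
        | nil => rfl
        | cons c t'' =>
          rcases hmem c (by simp) with h | h <;> subst h
          · exact absurd ht'x (by simp [List.count_cons])
          · exact absurd ht'y (by simp [List.count_cons])
      subst ht'
      rfl
    | succ m' =>
      obtain ⟨t'', rfl⟩ : ∃ t'', t' = x :: t'' := by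
        cases t' with
        | nil => exact absurd ht'x (by simp)
        | cons c t'' =>
          have hyc : y ≠ c := ((List.isChain_cons_cons.mp hch).2 |> List.isChain_cons_cons.mp).1
          rcases hmem c (by simp) with h | h
          · exact ⟨t'', by rw [h]⟩
          · exact absurd h.symm hyc
      have hrec := alt_struct_cons hxy m' t'' ?_ ?_ ?_ ?_
      · show x :: y :: (x :: t'') = altL x y (m' + 1 + 1)
        rw [hrec]
        rfl
      · intro z hz
        exact hmem z (by simp at hz ⊢; tauto)
      · exact ((List.isChain_cons_cons.mp hch).2 |> List.isChain_cons_cons.mp).2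
      · exact ht'x
      · exact ht'y

lemma alt_struct {x y : V} (hxy : x ≠ y) (l : List V) (m : ℕ)
    (hmem : ∀ z ∈ l, z = x ∨ z = y) (hch : l.Chain' (· ≠ ·))
    (hcx : l.count x = m) (hcy : l.count y = m) :
    l = altL x y m ∨ l = altL y x m := by
  cases m with
  | zero =>
    left
    cases l with
    | nil => rfl
    | cons a t =>
      rcases hmem a (by simp) with h | h <;> subst h
      · simp [List.count_cons] at hcx
      · simp [List.count_cons] at hcy
  | succ m =>
    obtain ⟨a, t, rfl⟩ : ∃ a t, l = a :: t := by
      cases l with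
      | nil => simp at hcx
      | cons a t => exact ⟨a, t, rfl⟩
    rcases hmem a (by simp) with h | h <;> subst h
    · left
      exact alt_struct_cons hxy m t hmem hch hcx hcy
    · right
      exact alt_struct_cons hxy.symm m t (fun z hz => (hmem z hz).symm) hch hcy hcx

lemma flatMap_const_altL {a b : V} : ∀ (L : List ℕ) (g : ℕ → List V),
    (∀ m ∈ L, g m = [a, b]) → L.flatMap g = altL a b L.length
  | [], g => fun _ => rfl
  | m :: L, g => by
    intro hg
    rw [List.flatMap_cons, hg m (by simp), flatMap_const_altL L g (fun m hm => hg m (by simp [hm]))]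
    rfl

theorem append_thueMorse_blocks_represents
    {V : Type*} [DecidableEq V] [Fintype V] [Nonempty V]
    (G : SimpleGraph V) (hconn : G.Connected)
    (k : ℕ) (hk : 3 ≤ k) (hrn : RepNumIs G k)
    (w : List V) (hu : KUniform k w) (hw : Represents G w) :
    ∀ i : ℕ,
      Represents G
        (w ++ (List.range i).flatMap fun m =>
          if cseq m = 2 then NthPerm 1 w
          else if cseq m = 1 then NthPerm 2 w
          else NthPerm 3 w) := by
  intro i
  set f : ℕ → List V := fun m =>
    if cseq m = 2 then NthPerm 1 w
    else if cseq m = 1 then NthPerm 2 w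
    else NthPerm 3 w with hf
  constructor
  · intro v
    exact List.mem_append_left _ (hw.1 v)
  · intro x y hxy
    set A : V → Bool := fun z => decide (z = x ∨ z = y) with hA
    have hfilt : (w ++ (List.range i).flatMap f).filter A
        = w.filter A ++ ((List.range i).flatMap f).filter A := List.filter_append _ _
    by_cases hadj : G.Adj x y
    · -- adjacent case
      have halt : Alternates x y w := (hw.2 x y hxy).mpr hadj
      have hchain : (w.filter A).Chain' (· ≠ ·) := halt
      have hAx : A x = true := by simp [hA]
      have hAy : A y = true := by simp [hA]
      have hcx : (w.filter A).count x = k := by rw [List.count_filter hAx]; exact hu x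
      have hcy : (w.filter A).count y = k := by rw [List.count_filter hAy]; exact hu y
      have hmem : ∀ z ∈ w.filter A, z = x ∨ z = y := by
        intro z hz
        have := (List.mem_filter.mp hz).2
        simpa [hA] using this
      obtain ⟨a, b, hab, hstruct⟩ :
          ∃ a b, a ≠ b ∧ w.filter A = altL a b k := by
        rcases alt_struct hxy (w.filter A) k hmem hchain hcx hcy with h | h
        · exact ⟨x, y, hxy, h⟩
        · exact ⟨y, x, hxy.symm, h⟩
      have hblock : ∀ j : ℕ, 1 ≤ j → j ≤ k → (NthPerm j w).filter A = [a, b] := by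
        intro j hj1 hjk
        rw [nthPerm_eq_np, np_filter, hstruct]
        have : (List.filter A ([] : List V)) = [] := rfl
        rw [this]
        exact np_altL hab j k [] (by simp) (by simp; omega) (by simpa using hjk)
      have hfm : ∀ m, (f m).filter A = [a, b] := by
        intro m
        rw [hf]
        by_cases h2 : cseq m = 2
        · simpa [h2] using hblock 1 le_rfl (by omega)
        · by_cases h1 : cseq m = 1
          · simpa [h2, h1] using hblock 2 (by omega) (by omega)
          · simpa [h2, h1] using hblock 3 (by omega) hk
      have htail : ((List.range i).flatMap f).filter A = altL a b i := by
        rw [List.filter_flatMap]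
        rw [flatMap_const_altL (List.range i) _ (fun m _ => hfm m)]
        simp
      have : (w ++ (List.range i).flatMap f).filter A = altL a b (k + i) := by
        rw [hfilt, hstruct, htail, altL_append]
      have halt' : Alternates x y (w ++ (List.range i).flatMap f) := by
        show ((w ++ (List.range i).flatMap f).filter A).Chain' (· ≠ ·)
        rw [this]
        exact altL_chain hab (k + i)
      exact iff_of_true halt' hadj
    · -- non-adjacent case
      have hnalt : ¬ Alternates x y w := fun h => hadj ((hw.2 x y hxy).mp h)
      refine iff_of_false ?_ hadj
      intro h
      have : ((w ++ (List.range i).flatMap f).filter A).Chain' (· ≠ ·) := h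
      rw [hfilt] at this
      exact hnalt (List.isChain_append.mp this).1
end

section
/- Let G be a connected word-representable simple graph on a vertex set V of size n whose representation number is k with k > 1, and let w be a k-uniform word representing G. Then there exists a natural number j with 0 ≤ j ≤ n such that the word obtained from w by deleting its last j letters does not have as its suffix of length n a permutation of V (i.e., its last n letters do not consist of each vertex of V exactly once). -/
variable {V : Type*} [DecidableEq V]

private lemma aux_len_count {x y : V} (hxy : x ≠ y) :
    ∀ L : List V, (∀ z ∈ L, z = x ∨ z = y) → L.length = L.count x + L.count y := by
  intro L
  induction L with
  | nil => simp
  | cons a t ih =>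
    intro h
    have ht := ih (fun z hz => h z (List.mem_cons_of_mem a hz))
    rcases h a List.mem_cons_self with rfl | rfl
    · simp [List.count_cons, hxy, hxy.symm, ht]; omega
    · simp [List.count_cons, hxy, hxy.symm, ht]; omega

theorem drop_some_suffix_kills_permutation_suffix
    {V : Type*} [DecidableEq V] [Fintype V] [Nonempty V]
    (G : SimpleGraph V) (hconn : G.Connected)
    (k : ℕ) (hk : 1 < k) (hrn : RepNumIs G k)
    (w : List V) (hu : KUniform k w) (hw : Represents G w) :
    ∃ j ≤ Fintype.card V,
      ¬ ∀ v : V,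
        (((w.take (w.length - j)).drop
          ((w.take (w.length - j)).length - Fintype.card V)).count v = 1) := by
  by_contra h
  push_neg at h
  have hn1 : 1 ≤ Fintype.card V := Fintype.card_pos
  have hlen : w.length = Fintype.card V * k := by
    have h1 : ∑ v : V, w.count v = w.length := by
      have := Multiset.sum_count_eq_card (s := (Finset.univ : Finset V))
        (m := (w : Multiset V)) (fun a _ => Finset.mem_univ a)
      simpa using this
    calc w.length = ∑ v : V, w.count v := h1.symm
      _ = ∑ _v : V, k := Finset.sum_congr rfl (fun v _ => hu v)
      _ = Fintype.card V * k := by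
          rw [Finset.sum_const, smul_eq_mul, Finset.card_univ]
  generalize hcard : Fintype.card V = n at h hn1 hlen
  obtain ⟨n', rfl⟩ : ∃ n', n = n' + 1 := ⟨n - 1, by omega⟩
  have hlen2 : 2 * (n' + 1) ≤ w.length := by
    have : (n' + 1) * 2 ≤ (n' + 1) * k := Nat.mul_le_mul_left (n' + 1) hk
    omega
  -- the permutation p : last n'+1 letters of w
  set p : List V := w.drop (w.length - (n' + 1)) with hp
  have hplen : p.length = n' + 1 := by
    rw [hp, List.length_drop]; omega
  -- windows: each length-(n'+1) block ending j letters from the end is a permutation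
  have hwin : ∀ j ≤ n' + 1, ∀ v : V,
      ((w.drop (w.length - (n' + 1) - j)).take (n' + 1)).count v = 1 := by
    intro j hj v
    have hthis := h j hj v
    have hlt : (w.take (w.length - j)).length = w.length - j := by
      rw [List.length_take]; omega
    rw [hlt, List.drop_take] at hthis
    have e1 : w.length - j - (w.length - j - (n' + 1)) = n' + 1 := by omega
    have e2 : w.length - j - (n' + 1) = w.length - (n' + 1) - j := by omega
    rw [e1, e2] at hthis
    exact hthis
  have hp1 : ∀ v : V, p.count v = 1 := by
    intro v
    have hthis := hwin 0 (Nat.zero_le _) v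
    rw [Nat.sub_zero, ← hp, List.take_of_length_le (by omega)] at hthis
    exact hthis
  -- key induction
  have hdrop : ∀ j ≤ n' + 1,
      w.drop (w.length - (n' + 1) - j) = p.drop (n' + 1 - j) ++ p := by
    intro j
    induction j with
    | zero =>
      intro _
      have hnil : p.drop (n' + 1) = [] := by
        apply List.drop_eq_nil_of_le; omega
      simp only [Nat.sub_zero]
      rw [hnil, List.nil_append, hp]
    | succ j ih =>
      intro hj1
      have hj : j ≤ n' + 1 := by omega
      have IH := ih hj
      have hmlt : w.length - (n' + 1) - (j + 1) < w.length := by omega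
      have hm1 : w.length - (n' + 1) - (j + 1) + 1 = w.length - (n' + 1) - j := by
        omega
      set m := w.length - (n' + 1) - (j + 1) with hm
      set a := w[m] with ha
      have hdm : w.drop m = a :: (p.drop (n' + 1 - j) ++ p) := by
        rw [List.drop_eq_getElem_cons hmlt, hm1, IH]
      have hidx : n' - j < p.length := by omega
      set b := p[n' - j] with hb
      have e5 : n' - j + 1 = n' + 1 - j := by omega
      have hpdrop : p.drop (n' - j) = b :: p.drop (n' + 1 - j) := by
        rw [List.drop_eq_getElem_cons hidx, e5]
      have hdroplen : (p.drop (n' + 1 - j)).length = j := by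
        rw [List.length_drop, hplen]; omega
      -- compute the (j+1)-window
      have hwj : (w.drop m).take (n' + 1)
          = a :: (p.drop (n' + 1 - j) ++ p.take (n' - j)) := by
        rw [hdm, List.take_succ_cons, List.take_append, hdroplen,
          List.take_of_length_le (by rw [hdroplen]; omega)]
      -- p decomposition around position n' - j
      have hpdecomp : p = p.take (n' - j) ++ (b :: p.drop (n' + 1 - j)) := by
        conv_lhs => rw [← List.take_append_drop (n' - j) p]
        rw [hpdrop]
      have hca : ((w.drop m).take (n' + 1)).count a = 1 := hwin (j + 1) hj1 a
      rw [hwj] at hca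
      have hpa := hp1 a
      rw [hpdecomp] at hpa
      have hba : b = a := by
        simp only [List.count_cons, List.count_append, beq_iff_eq] at hca hpa
        by_cases hba' : b = a
        · exact hba'
        · exfalso
          rw [if_neg hba'] at hpa
          simp only [if_true] at hca
          omega
      have e3 : n' + 1 - (j + 1) = n' - j := by omega
      rw [hdm, e3, hpdrop, hba, List.cons_append]
  -- hence w = u ++ p ++ p
  have hsplit : w = w.take (w.length - 2 * (n' + 1)) ++ (p ++ p) := by
    have hd := hdrop (n' + 1) le_rfl
    have e : w.length - (n' + 1) - (n' + 1) = w.length - 2 * (n' + 1) := by omega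
    rw [e, Nat.sub_self, List.drop_zero] at hd
    conv_lhs => rw [← List.take_append_drop (w.length - 2 * (n' + 1)) w]
    rw [hd]
  set u := w.take (w.length - 2 * (n' + 1)) with hu2
  -- the shorter word u ++ p
  have hcount2 : ∀ v : V, (u ++ p).count v = k - 1 := by
    intro v
    have hcw : w.count v = k := hu v
    rw [hsplit] at hcw
    simp only [List.count_append] at hcw ⊢
    have := hp1 v
    omega
  have hmem2 : ∀ v : V, v ∈ u ++ p := by
    intro v
    rw [← List.count_pos_iff, hcount2 v]
    omega
  have halt : ∀ x y : V, x ≠ y → (Alternates x y (u ++ p) ↔ Alternates x y w) := by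
    intro x y hxy
    unfold Alternates
    set π : V → Bool := fun z => decide (z = x ∨ z = y) with hπ
    have hπx : π x = true := by simp [hπ]
    have hπy : π y = true := by simp [hπ]
    have hfw : w.filter π = (u.filter π ++ p.filter π) ++ p.filter π := by
      conv_lhs => rw [hsplit]
      simp [List.filter_append]
    have hfx : (p.filter π).count x = 1 := by rw [List.count_filter hπx]; exact hp1 x
    have hfy : (p.filter π).count y = 1 := by rw [List.count_filter hπy]; exact hp1 y
    have hfplen : (p.filter π).length = 2 := by
      rw [aux_len_count hxy (p.filter π) ?_, hfx, hfy]
      intro z hz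
      have := List.of_mem_filter hz
      simpa [hπ] using this
    obtain ⟨a, b, hab⟩ := List.length_eq_two.mp hfplen
    have haneb : a ≠ b := by
      intro hEq
      subst hEq
      have hax : a = x ∨ a = y := by
        have : a ∈ p.filter π := by rw [hab]; exact List.mem_cons_self
        simpa [hπ] using List.of_mem_filter this
      rcases hax with rfl | rfl
      · rw [hab] at hfx; simp [List.count_cons] at hfx
      · rw [hab] at hfy; simp [List.count_cons] at hfy
    rw [hfw, hab, List.filter_append, hab]
    constructor
    · intro hch
      unfold List.Chain' at hch ⊢
      rw [List.isChain_append]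
      refine ⟨hch, by simp [haneb], ?_⟩
      intro z hz y' hy'
      have hz' : z = b := by
        simp only [List.getLast?_append, Option.mem_def] at hz
        exact (by simpa using hz : b = z).symm
      have hy'' : y' = a := (by simpa using hy' : a = y').symm
      rw [hz', hy'']
      exact haneb.symm
    · intro hch
      exact (List.isChain_append.mp hch).1
  have hrep2 : Represents G (u ++ p) :=
    ⟨hmem2, fun x y hxy => (halt x y hxy).trans (hw.2 x y hxy)⟩
  have hle := hrn.2 (k - 1) ⟨u ++ p, hcount2, hrep2⟩
  omega
end

section
/- Let G be a connected word-representable simple graph on a finite nonempty vertex set V whose representation number is 2. Then there exists a 2-uniform word w representing G such that the initial permutation π(w) is different from the final permutation σ(w). -/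
variable {V : Type*} [DecidableEq V]

/-- The final permutation `σ(w)`: delete all but the rightmost occurrence of
each letter. -/
def finalPerm (w : List V) : List V := w.dedup

/-- The initial permutation `π(w)`: delete all but the leftmost occurrence of
each letter. -/
def initPerm (w : List V) : List V := (w.reverse.dedup).reverse

/-! ### Auxiliary lemmas -/

lemma dedup_filter (p : V → Bool) : ∀ (l : List V),
    (l.dedup.filter p) = (l.filter p).dedup := by
  intro l
  induction l with
  | nil => simp
  | cons a l ih =>
    by_cases h : a ∈ l
    · rw [List.dedup_cons_of_mem h]
      by_cases hp : p a
      · rw [List.filter_cons_of_pos hp, List.dedup_cons_of_mem (List.mem_filter.2 ⟨h, hp⟩), ih]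
      · rw [List.filter_cons_of_neg (by simpa using hp), ih]
    · rw [List.dedup_cons_of_notMem h]
      by_cases hp : p a
      · rw [List.filter_cons_of_pos hp, List.filter_cons_of_pos hp,
          List.dedup_cons_of_notMem (fun hh => h (List.mem_of_mem_filter hh)), ih]
      · rw [List.filter_cons_of_neg (by simpa using hp),
          List.filter_cons_of_neg (by simpa using hp), ih]

lemma finalPerm_filter (p : V → Bool) (w : List V) :
    (finalPerm w).filter p = finalPerm (w.filter p) := by
  simp [finalPerm, dedup_filter]

lemma initPerm_filter (p : V → Bool) (w : List V) :
    (initPerm w).filter p = initPerm (w.filter p) := by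
  unfold initPerm
  rw [List.filter_reverse, dedup_filter, List.filter_reverse]

lemma length_eq_count_add_count {x y : V} (hxy : x ≠ y) :
    ∀ l : List V, (∀ z ∈ l, z = x ∨ z = y) → l.length = l.count x + l.count y := by
  intro l
  induction l with
  | nil => simp
  | cons a l ih =>
    intro h
    have ha := h a (by simp)
    have hl := ih (fun z hz => h z (by simp [hz]))
    rcases ha with rfl | rfl <;>
      simp [List.count_cons, hxy, hxy.symm, hl] <;> omega

lemma chain_shift {a b : V} (hab : a ≠ b) (g : List V)
    (hg : ∀ z ∈ g, z = a ∨ z = b) (h1 : g.count a = 1) (h2 : g.count b = 2) :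
    ((g ++ [a]).Chain' (· ≠ ·)) ↔ ((a :: g).Chain' (· ≠ ·)) := by
  have hlen : g.length = 3 := by
    rw [length_eq_count_add_count hab g hg, h1, h2]
  obtain ⟨z1, z2, z3, rfl⟩ := List.length_eq_three.1 hlen
  have e1 := hg z1 (by simp)
  have e2 := hg z2 (by simp)
  have e3 := hg z3 (by simp)
  rcases e1 with rfl | rfl <;> rcases e2 with rfl | rfl <;> rcases e3 with rfl | rfl <;>
    simp_all [List.count_cons, List.Chain', List.isChain_cons_cons]

lemma alternates_shift {x y c : V} {u : List V} (hxy : x ≠ y)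
    (hx : (c :: u).count x = 2) (hy : (c :: u).count y = 2) :
    Alternates x y (u ++ [c]) ↔ Alternates x y (c :: u) := by
  unfold Alternates
  set p : V → Bool := fun z => decide (z = x ∨ z = y) with hp
  have hpx : p x = true := by simp [hp]
  have hpy : p y = true := by simp [hp]
  by_cases hc : p c
  · have hmem : ∀ z ∈ u.filter p, z = x ∨ z = y := by
      intro z hz
      have := List.of_mem_filter hz
      simpa [hp] using this
    have hcxy : c = x ∨ c = y := by simpa [hp] using hc
    have hsplit : (u ++ [c]).filter p = u.filter p ++ [c] := by
      simp [List.filter_append, hc]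
    have hsplit2 : (c :: u).filter p = c :: u.filter p := List.filter_cons_of_pos hc
    rw [hsplit, hsplit2]
    rcases hcxy with rfl | rfl
    · have hcx : u.count c = 1 := by
        simp [List.count_cons] at hx; omega
      have hcy : u.count y = 2 := by
        simp [List.count_cons, hxy.symm, hxy] at hy; omega
      exact chain_shift hxy (u.filter p) hmem
        (by rw [List.count_filter hpx]; exact hcx)
        (by rw [List.count_filter hpy]; exact hcy)
    · have hcx : u.count x = 2 := by
        simp [List.count_cons, hxy, hxy.symm] at hx; omega
      have hcy : u.count c = 1 := by
        simp [List.count_cons] at hy; omega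
      exact chain_shift hxy.symm (u.filter p)
        (fun z hz => (hmem z hz).elim Or.inr Or.inl)
        (by rw [List.count_filter hpy]; exact hcy)
        (by rw [List.count_filter hpx]; exact hcx)
  · have hsplit : (u ++ [c]).filter p = u.filter p := by
      simp [List.filter_append, hc]
    have hsplit2 : (c :: u).filter p = u.filter p := by
      simp [List.filter_cons, hc]
    rw [hsplit, hsplit2]

lemma shift_keeps (G : SimpleGraph V) (c : V) (u : List V)
    (h2 : KUniform 2 (c :: u)) (hrep : Represents G (c :: u)) :
    KUniform 2 (u ++ [c]) ∧ Represents G (u ++ [c]) := by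
  constructor
  · intro v
    have := h2 v
    simp [List.count_append, List.count_cons] at this ⊢
    omega
  · constructor
    · intro v
      have := hrep.1 v
      simp at this ⊢
      tauto
    · intro x y hxy
      rw [← hrep.2 x y hxy]
      exact alternates_shift hxy (h2 x) (h2 y)

lemma rotate_keeps [Nonempty V] (G : SimpleGraph V) (w : List V)
    (h2 : KUniform 2 w) (hrep : Represents G w) (k : ℕ) :
    KUniform 2 (w.rotate k) ∧ Represents G (w.rotate k) := by
  induction k with
  | zero => simpa using ⟨h2, hrep⟩
  | succ k ih =>
    rw [← List.rotate_rotate w k 1]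
    rcases hh : w.rotate k with _ | ⟨c, u⟩
    · exfalso
      have := ih.1 (Classical.arbitrary V)
      rw [hh] at this
      simp at this
    · rw [hh] at ih
      rw [show (c :: u).rotate 1 = u ++ [c] by
        rw [List.rotate_cons_succ, List.rotate_zero]]
      exact shift_keeps G c u ih.1 ih.2

lemma shape_lemma {x y : V} (hxy : x ≠ y) (g : List V)
    (hmem : ∀ z ∈ g, z = x ∨ z = y) (hcx : g.count x = 1) (hcy : g.count y = 2) :
    g = [x, y, y] ∨ g = [y, x, y] ∨ g = [y, y, x] := by
  have hlen : g.length = 3 := by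
    rw [length_eq_count_add_count hxy g hmem, hcx, hcy]
  obtain ⟨z1, z2, z3, rfl⟩ := List.length_eq_three.1 hlen
  have e1 := hmem z1 (by simp)
  have e2 := hmem z2 (by simp)
  have e3 := hmem z3 (by simp)
  rcases e1 with rfl | rfl <;> rcases e2 with rfl | rfl <;> rcases e3 with rfl | rfl <;>
    simp_all [List.count_cons]

lemma adj_of_double_eq {G : SimpleGraph V} {x y : V} (hxy : x ≠ y) {u : List V}
    (h2 : KUniform 2 (x :: u)) (hrep : Represents G (x :: u))
    (he1 : initPerm (x :: u) = finalPerm (x :: u))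
    (he2 : initPerm (u ++ [x]) = finalPerm (u ++ [x])) : G.Adj x y := by
  have hpx : (fun z => decide (z = x ∨ z = y)) x = true := by simp
  have hpy : (fun z => decide (z = x ∨ z = y)) y = true := by simp
  have hf1 : initPerm ((x :: u).filter (fun z => decide (z = x ∨ z = y)))
      = finalPerm ((x :: u).filter (fun z => decide (z = x ∨ z = y))) := by
    rw [← initPerm_filter, ← finalPerm_filter, he1]
  have hf2 : initPerm ((u ++ [x]).filter (fun z => decide (z = x ∨ z = y)))
      = finalPerm ((u ++ [x]).filter (fun z => decide (z = x ∨ z = y))) := by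
    rw [← initPerm_filter, ← finalPerm_filter, he2]
  have hsplit1 : (x :: u).filter (fun z => decide (z = x ∨ z = y))
      = x :: u.filter (fun z => decide (z = x ∨ z = y)) := List.filter_cons_of_pos hpx
  have hsplit2 : (u ++ [x]).filter (fun z => decide (z = x ∨ z = y))
      = u.filter (fun z => decide (z = x ∨ z = y)) ++ [x] := by
    simp [List.filter_append]
  have hmem : ∀ z ∈ u.filter (fun z => decide (z = x ∨ z = y)), z = x ∨ z = y := by
    intro z hz
    simpa using List.of_mem_filter hz
  have hcx : (u.filter (fun z => decide (z = x ∨ z = y))).count x = 1 := by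
    rw [List.count_filter (p := fun z => decide (z = x ∨ z = y)) (a := x) (l := u) (by simp)]
    have := h2 x
    simp [List.count_cons] at this
    omega
  have hcy : (u.filter (fun z => decide (z = x ∨ z = y))).count y = 2 := by
    rw [List.count_filter (p := fun z => decide (z = x ∨ z = y)) (a := y) (l := u) (by simp)]
    have := h2 y
    simp [List.count_cons, hxy.symm, hxy] at this
    omega
  have dd : ([x, y, y, x] : List V).dedup = [y, x] := by
    rw [List.dedup_cons_of_mem (by simp), List.dedup_cons_of_mem (by simp),
      List.dedup_cons_of_notMem (by simp [hxy.symm]),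
      List.dedup_cons_of_notMem (by simp), List.dedup_nil]
  have dI : initPerm ([x, y, y, x] : List V) = [x, y] := by
    have hrev : ([x, y, y, x] : List V).reverse = [x, y, y, x] := by simp
    rw [initPerm, hrev, dd]
    simp
  have hne : initPerm ([x, y, y, x] : List V) ≠ finalPerm ([x, y, y, x] : List V) := by
    rw [dI, finalPerm, dd]
    simp [hxy]
  rcases shape_lemma hxy _ hmem hcx hcy with hsh | hsh | hsh
  · exfalso
    rw [hsplit2, hsh] at hf2
    exact hne hf2
  · have halt : Alternates x y (x :: u) := by
      unfold Alternates
      rw [hsplit1, hsh]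
      simp [List.Chain', List.isChain_cons_cons, hxy, hxy.symm]
    exact (hrep.2 x y hxy).1 halt
  · exfalso
    rw [hsplit1, hsh] at hf1
    exact hne hf1

lemma complete_one_uniform [Fintype V] (G : SimpleGraph V)
    (hc : ∀ a b : V, a ≠ b → G.Adj a b) :
    ∃ w : List V, KUniform 1 w ∧ Represents G w := by
  refine ⟨Finset.univ.toList, fun v => List.count_eq_one_of_mem
    (Finset.nodup_toList _) (by simp), fun v => by simp, fun a b hab => ?_⟩
  constructor
  · intro _; exact hc a b hab
  · intro _
    exact List.Pairwise.isChain
      ((Finset.nodup_toList (Finset.univ : Finset V)).filter _)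

theorem exists_two_uniform_word_with_distinct_initial_final_perm
    {V : Type*} [DecidableEq V] [Fintype V] [Nonempty V]
    (G : SimpleGraph V) (hconn : G.Connected) (hrn : RepNumIs G 2) :
    ∃ w : List V, KUniform 2 w ∧ Represents G w ∧ initPerm w ≠ finalPerm w := by
  obtain ⟨w0, hu0, hrep0⟩ := hrn.1
  by_cases H : ∀ k, initPerm (w0.rotate k) = finalPerm (w0.rotate k)
  · exfalso
    have hnotc : ¬ ∀ a b : V, a ≠ b → G.Adj a b := by
      intro hc
      have := hrn.2 1 (complete_one_uniform G hc)
      omega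
    push_neg at hnotc
    obtain ⟨x, y, hxy, hna⟩ := hnotc
    obtain ⟨i, hi, hix⟩ := List.mem_iff_getElem.1 (hrep0.1 x)
    set u : List V := w0.drop (i + 1) ++ w0.take i with hu
    have hrot : w0.rotate i = x :: u := by
      rw [List.rotate_eq_drop_append_take hi.le, List.drop_eq_getElem_cons hi, hix, hu]
      rfl
    have hrot2 : w0.rotate (i + 1) = u ++ [x] := by
      rw [← List.rotate_rotate w0 i 1, hrot, List.rotate_cons_succ, List.rotate_zero]
    have hk := rotate_keeps G w0 hu0 hrep0 i
    rw [hrot] at hk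
    have h1 := H i
    have h2 := H (i + 1)
    rw [hrot] at h1
    rw [hrot2] at h2
    exact hna (adj_of_double_eq hxy hk.1 hk.2 h1 h2)
  · push_neg at H
    obtain ⟨k, hk⟩ := H
    have h := rotate_keeps G w0 hu0 hrep0 k
    exact ⟨w0.rotate k, h.1, h.2, hk⟩
end
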